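/- Let V be an F₂-vector space with alternating form, spanned by elements {ẽ_E : E ∈ edges} such that the kernel of the natural surjection from the free F₂-vector space on edges is spanned by the total relation R = Σ_E E together with face relations R_F = Σ_{E ⊂ ∂F} E. Suppose the unique quadratic refinement σ̄ on the free space with σ̄(E) = 1 for all edges (with pulled-back form) satisfies σ̄(R_F) = 0 for all faces F. Then there exists a quadratic refinement σ on V with σ(ẽ_E) = 1 for all E if and only if σ̄(R) = 0, and in that case σ is unique. -/
import Mathlib


/-- A quadratic refinement of a bilinear form `B` over `F₂`. -/
def IsQuadraticRefinement {V : Type*} [AddCommGroup V] [Module (ZMod 2) V]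
    (B : V →ₗ[ZMod 2] V →ₗ[ZMod 2] ZMod 2) (σ : V → ZMod 2) : Prop :=
  ∀ x y, σ (x + y) = σ x + σ y + B x y

/-- Let `V` be an `F₂`-vector space with alternating form, spanned by
elements `ẽ_E = π(E)` indexed by edges, where the kernel of the surjection `π` from the
free `F₂`-space on edges is spanned by the total relation `R = Σ_E E` together with the
face relations `R_F = Σ_{E ⊂ ∂F} E`.  Suppose the quadratic refinement `σ̄` of the
pulled-back form with `σ̄(E) = 1` for all edges satisfies `σ̄(R_F) = 0` for all faces.
Then there is a quadratic refinement `σ` on `V` with `σ(ẽ_E) = 1` for all `E` iff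
`σ̄(R) = 0`, and such a `σ` is unique. -/
theorem quadRefinement_descends_total_relation
    {ε φ V : Type*} [Fintype ε] [DecidableEq ε] [Fintype φ]
    [AddCommGroup V] [Module (ZMod 2) V]
    (π : (ε → ZMod 2) →ₗ[ZMod 2] V) (hsurj : Function.Surjective π)
    (B : V →ₗ[ZMod 2] V →ₗ[ZMod 2] ZMod 2)
    (halt : ∀ x, B x x = 0)
    (bd : φ → Finset ε)
    (hker : LinearMap.ker π
      = Submodule.span (ZMod 2)
          (insert (∑ E : ε, Pi.single E (1 : ZMod 2))
            (Set.range fun F : φ => ∑ E ∈ bd F, Pi.single E (1 : ZMod 2))))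
    (σb : (ε → ZMod 2) → ZMod 2)
    (hσb : ∀ x y, σb (x + y) = σb x + σb y + B (π x) (π y))
    (hσb1 : ∀ E : ε, σb (Pi.single E 1) = 1)
    (hσbF : ∀ F : φ, σb (∑ E ∈ bd F, Pi.single E (1 : ZMod 2)) = 0) :
    ((∃ σ : V → ZMod 2, IsQuadraticRefinement B σ ∧ ∀ E : ε, σ (π (Pi.single E 1)) = 1)
        ↔ σb (∑ E : ε, Pi.single E (1 : ZMod 2)) = 0)
    ∧ (∀ σ₁ σ₂ : V → ZMod 2,
        (IsQuadraticRefinement B σ₁ ∧ ∀ E : ε, σ₁ (π (Pi.single E 1)) = 1) →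
        (IsQuadraticRefinement B σ₂ ∧ ∀ E : ε, σ₂ (π (Pi.single E 1)) = 1) →
        σ₁ = σ₂) := by
  have hcases : ∀ c : ZMod 2, c = 0 ∨ c = 1 := by decide
  have hσb0 : σb 0 = 0 := by
    have h := hσb 0 0
    simp only [add_zero, map_zero, LinearMap.zero_apply] at h
    rw [CharTwo.add_self_eq_zero] at h
    simpa using h
  -- every element of the free space lies in the span of the singles
  have hspan : ∀ x : ε → ZMod 2,
      x ∈ Submodule.span (ZMod 2) (Set.range fun E : ε => Pi.single E (1 : ZMod 2)) := by
    intro x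
    have : x = ∑ E : ε, x E • Pi.single E (1 : ZMod 2) := by
      ext j; simp [Finset.sum_apply, Pi.single_apply]
    rw [this]
    exact Submodule.sum_mem _ fun E _ =>
      Submodule.smul_mem _ _ (Submodule.subset_span ⟨E, rfl⟩)
  -- if two quadratic refinements of the pulled-back form agree on singles, they agree
  have hunique_free : ∀ f g : (ε → ZMod 2) → ZMod 2,
      (∀ x y, f (x + y) = f x + f y + B (π x) (π y)) →
      (∀ x y, g (x + y) = g x + g y + B (π x) (π y)) →
      (∀ E : ε, f (Pi.single E 1) = g (Pi.single E 1)) → ∀ x, f x = g x := by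
    intro f g hf hg hE x
    have f0 : f 0 = 0 := by
      have h := hf 0 0
      simp only [add_zero, map_zero, LinearMap.zero_apply] at h
      rw [CharTwo.add_self_eq_zero] at h; simpa using h
    have g0 : g 0 = 0 := by
      have h := hg 0 0
      simp only [add_zero, map_zero, LinearMap.zero_apply] at h
      rw [CharTwo.add_self_eq_zero] at h; simpa using h
    refine Submodule.span_induction ?_ ?_ ?_ ?_ (hspan x)
    · rintro _ ⟨E, rfl⟩; exact hE E
    · rw [f0, g0]
    · intro a b _ _ ha hb
      rw [hf, hg, ha, hb]
    · intro c a _ ha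
      rcases hcases c with rfl | rfl
      · simp [f0, g0]
      · simpa using ha
  constructor
  · constructor
    · -- existence implies σb(R) = 0
      rintro ⟨σ, hσ, hσ1⟩
      have σ0 : σ 0 = 0 := by
        have h := hσ 0 0
        simp only [add_zero, map_zero, LinearMap.zero_apply] at h
        rw [CharTwo.add_self_eq_zero] at h; simpa using h
      have heq : ∀ x, σ (π x) = σb x := by
        refine hunique_free _ _ ?_ hσb ?_
        · intro x y; rw [map_add]; exact hσ _ _
        · intro E; rw [hσ1, hσb1]
      have hRker : (∑ E : ε, Pi.single E (1 : ZMod 2)) ∈ LinearMap.ker π := by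
        rw [hker]; exact Submodule.subset_span (Set.mem_insert _ _)
      rw [← heq, LinearMap.mem_ker.mp hRker, σ0]
    · -- σb(R) = 0 implies existence
      intro hR
      -- σb vanishes on the kernel
      have hker0 : ∀ x ∈ LinearMap.ker π, σb x = 0 := by
        intro x hx
        rw [hker] at hx
        refine Submodule.span_induction ?_ hσb0 ?_ ?_ hx
        · rintro g (rfl | ⟨F, rfl⟩)
          · exact hR
          · exact hσbF F
        · intro a b ha hb ha0 hb0
          have hpa : π a = 0 := by
            have : a ∈ LinearMap.ker π := by rw [hker]; exact ha
            exact LinearMap.mem_ker.mp this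
          rw [hσb, ha0, hb0, hpa, map_zero, LinearMap.zero_apply]
          ring
        · intro c a ha ha0
          rcases hcases c with rfl | rfl
          · simpa using hσb0
          · simpa using ha0
      -- σb descends: constant on fibers of π
      have hdesc : ∀ x y : ε → ZMod 2, π x = π y → σb x = σb y := by
        intro x y hxy
        have hk : π (x + y) = 0 := by
          have h2 : (2 : ZMod 2) = 0 := rfl
          rw [map_add, hxy, ← two_smul (ZMod 2), h2, zero_smul]
        have hmem : σb (x + y) = 0 := hker0 _ (LinearMap.mem_ker.mpr hk)
        have hx : y + (x + y) = x := by
          have hself : y + y = 0 := by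
            ext j; exact CharTwo.add_self_eq_zero _
          have : y + (x + y) = x + (y + y) := by abel
          rw [this, hself, add_zero]
        calc σb x = σb (y + (x + y)) := by rw [hx]
          _ = σb y + σb (x + y) + B (π y) (π (x + y)) := hσb _ _
          _ = σb y := by rw [hmem, hk, map_zero, add_zero, add_zero]
      choose s hs using hsurj
      refine ⟨fun v => σb (s v), ?_, ?_⟩
      · intro u v
        show σb (s (u + v)) = σb (s u) + σb (s v) + B u v
        have h1 : σb (s (u + v)) = σb (s u + s v) := by
          apply hdesc; rw [map_add, hs, hs, hs]
        rw [h1, hσb, hs, hs]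
      · intro E
        show σb (s (π (Pi.single E 1))) = 1
        have : σb (s (π (Pi.single E 1))) = σb (Pi.single E 1) := by
          apply hdesc; rw [hs]
        rw [this, hσb1]
  · -- uniqueness
    rintro σ₁ σ₂ ⟨h₁, h₁E⟩ ⟨h₂, h₂E⟩
    funext v
    obtain ⟨x, rfl⟩ := hsurj v
    refine hunique_free (σ₁ ∘ π) (σ₂ ∘ π) ?_ ?_ ?_ x
    · intro a b; simp only [Function.comp_apply, map_add]; exact h₁ _ _
    · intro a b; simp only [Function.comp_apply, map_add]; exact h₂ _ _
    · intro E; simp only [Function.comp_apply]; rw [h₁E, h₂E]
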